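/- arXiv:math/0401002 — 4 statements merged into one kernel-verified Lean document; each statement's English description precedes it below -/
import Mathlib

section
/- Let A be an associative algebra over a commutative ring R with 1/|Γ| ∈ R, where Γ is a finite group acting on A by R-algebra automorphisms. Let e = (1/|Γ|) · Σ_{γ ∈ Γ} γ in the smash product A # Γ. Then e is an idempotent, and e(A # Γ)e is isomorphic as an R-algebra to the invariant subalgebra A^Γ. -/
/-- `B` is the smash product `A # Γ`: via `ι : A → B` and `u : Γ → Bˣ`, every element of
`B` is uniquely `∑ ι(a_γ)·u_γ`, and `u_γ · ι(a) = ι(γ • a) · u_γ`. -/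
structure IsSmashProduct (A B Γ : Type*) [Ring A] [Ring B] [Group Γ] [Fintype Γ]
    [MulSemiringAction Γ A] (ι : A →+* B) (u : Γ →* Bˣ) : Prop where
  conj : ∀ (γ : Γ) (a : A), (u γ : B) * ι a = ι (γ • a) * (u γ : B)
  basis : Function.Bijective fun f : Γ → A => ∑ γ : Γ, ι (f γ) * ((u γ : Bˣ) : B)

/-- The invariant subalgebra `A^Γ` of a `Γ`-action on an `R`-algebra `A` by `R`-algebra
automorphisms. -/
def invariantSubalgebra (R A Γ : Type*) [CommRing R] [Ring A] [Algebra R A] [Group Γ]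
    [MulSemiringAction Γ A]
    (hR : ∀ (γ : Γ) (r : R), γ • (algebraMap R A r) = algebraMap R A r) :
    Subalgebra R A where
  carrier := {a | ∀ γ : Γ, γ • a = a}
  mul_mem' := by intro a b ha hb γ; rw [smul_mul', ha, hb]
  add_mem' := by intro a b ha hb γ; rw [smul_add, ha, hb]
  algebraMap_mem' := fun r γ => hR γ r

/-- Let `A` be an associative algebra over a commutative ring `R` with
`1/|Γ| ∈ R`, where the finite group `Γ` acts on `A` by `R`-algebra automorphisms, and let
`e = (1/|Γ|)·Σ_{γ ∈ Γ} γ` in the smash product `B = A # Γ`. Then `e` is idempotent and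
the corner ring `e·(A#Γ)·e` is isomorphic as an `R`-algebra to the invariant subalgebra
`A^Γ` (via `a ↦ ι(a)·e`). -/
theorem smash_idempotent_corner_iso_invariants
    {R A B Γ : Type*} [CommRing R] [Ring A] [Algebra R A] [Ring B]
    [Group Γ] [Fintype Γ] [MulSemiringAction Γ A]
    (hR : ∀ (γ : Γ) (r : R), γ • (algebraMap R A r) = algebraMap R A r)
    (ι : A →+* B) (u : Γ →* Bˣ) (hB : IsSmashProduct A B Γ ι u)
    (ν : R) (hν : (Fintype.card Γ : R) * ν = 1)
    (e : B) (he : e = ∑ γ : Γ, ι (algebraMap R A ν) * ((u γ : Bˣ) : B)) :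
    IsIdempotentElem e ∧
      ∃ f : invariantSubalgebra R A Γ hR → B,
        Function.Injective f ∧
        Set.range f = {x : B | e * x * e = x} ∧
        (∀ a : invariantSubalgebra R A Γ hR, f a = ι (a : A) * e) ∧
        (∀ a b : invariantSubalgebra R A Γ hR, f (a + b) = f a + f b) ∧
        (∀ a b : invariantSubalgebra R A Γ hR, f (a * b) = f a * f b) ∧
        f 1 = e ∧
        (∀ r : R, f (algebraMap R (invariantSubalgebra R A Γ hR) r) =
          ι (algebraMap R A r) * e) := by
  set νA := algebraMap R A ν with hνA
  have hνinv : ∀ γ : Γ, γ • νA = νA := fun γ => hR γ ν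
  have hcomm : ∀ a : A, νA * a = a * νA := fun a => Algebra.commutes ν a
  have hcardsmul : (Fintype.card Γ) • νA = 1 := by
    rw [hνA, ← map_nsmul, nsmul_eq_mul, hν, map_one]
  have hcard : ∀ a : A, (Fintype.card Γ) • (νA * a) = a := by
    intro a
    rw [← smul_mul_assoc, hcardsmul, one_mul]
  -- u γ * e = e
  have hue : ∀ γ : Γ, (u γ : B) * e = e := by
    intro γ
    calc (u γ : B) * e = ∑ δ : Γ, (u γ : B) * (ι νA * ((u δ : Bˣ) : B)) := by
          rw [he, Finset.mul_sum]
      _ = ∑ δ : Γ, ι νA * ((u (γ * δ) : Bˣ) : B) := by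
          refine Finset.sum_congr rfl fun δ _ => ?_
          rw [← mul_assoc, hB.conj, hνinv, mul_assoc, ← Units.val_mul, ← map_mul]
      _ = e := by
          rw [he]
          simpa using Equiv.sum_comp (Equiv.mulLeft γ) (fun δ => ι νA * ((u δ : Bˣ) : B))
  -- e * e = e
  have hee : e * e = e := by
    nth_rewrite 1 [he]
    rw [Finset.sum_mul]
    have h1 : ∀ γ : Γ, (ι νA * ((u γ : Bˣ) : B)) * e = ι νA * e := by
      intro γ; rw [mul_assoc, hue]
    rw [Finset.sum_congr rfl fun γ _ => h1 γ, Finset.sum_const, Finset.card_univ,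
      ← smul_mul_assoc, ← map_nsmul, hcardsmul, map_one, one_mul]
  -- e * ι a = ι a * e for invariant a
  have heι : ∀ a : A, (∀ γ : Γ, γ • a = a) → e * ι a = ι a * e := by
    intro a ha
    rw [he, Finset.sum_mul, Finset.mul_sum]
    refine Finset.sum_congr rfl fun γ _ => ?_
    rw [mul_assoc, hB.conj, ha, ← mul_assoc, ← map_mul, hcomm, map_mul, mul_assoc]
  -- representation of ι a * e in the basis
  have hrep : ∀ a : A, ι a * e = ∑ γ : Γ, ι (νA * a) * ((u γ : Bˣ) : B) := by
    intro a
    rw [he, Finset.mul_sum]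
    refine Finset.sum_congr rfl fun γ _ => ?_
    rw [← mul_assoc, ← map_mul, ← hcomm]
  refine ⟨hee, fun a => ι (a : A) * e, ?_, ?_, fun a => rfl, ?_, ?_, ?_, ?_⟩
  · -- injective
    intro a b hab
    have hab' : ι (a : A) * e = ι (b : A) * e := hab
    rw [hrep, hrep] at hab'
    have h2 := hB.basis.injective hab'
    have h1 : νA * (a : A) = νA * (b : A) := congrFun h2 1
    have h3 : ((Fintype.card Γ) • (νA * (a : A)) : A)
        = (Fintype.card Γ) • (νA * (b : A)) := by rw [h1]
    rw [hcard, hcard] at h3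
    exact Subtype.ext h3
  · -- range
    ext x
    constructor
    · rintro ⟨a, rfl⟩
      show e * (ι (a : A) * e) * e = ι (a : A) * e
      rw [← mul_assoc, heι _ a.2, mul_assoc, mul_assoc, hee, hee]
    · intro hx
      obtain ⟨g, hg⟩ := hB.basis.surjective x
      set c : A := ∑ γ : Γ, g γ with hc
      set a : A := ∑ γ : Γ, νA * (γ • c) with ha
      have hainv : ∀ δ : Γ, δ • a = a := by
        intro δ
        rw [ha, Finset.smul_sum]
        have h1 : ∀ γ : Γ, δ • (νA * (γ • c)) = νA * ((δ * γ) • c) := by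
          intro γ
          rw [smul_mul', hνinv, smul_smul]
        rw [Finset.sum_congr rfl fun γ _ => h1 γ]
        simpa using Equiv.sum_comp (Equiv.mulLeft δ) (fun γ => νA * (γ • c))
      refine ⟨⟨a, hainv⟩, ?_⟩
      show ι a * e = x
      have hxe : x * e = ι c * e := by
        rw [← hg, Finset.sum_mul]
        have h1 : ∀ γ : Γ, (ι (g γ) * ((u γ : Bˣ) : B)) * e = ι (g γ) * e := by
          intro γ; rw [mul_assoc, hue]
        rw [Finset.sum_congr rfl fun γ _ => h1 γ, ← Finset.sum_mul, ← map_sum]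
      have heιc : e * ι c = ∑ γ : Γ, ι (νA * (γ • c)) * ((u γ : Bˣ) : B) := by
        rw [he, Finset.sum_mul]
        refine Finset.sum_congr rfl fun γ _ => ?_
        rw [mul_assoc, hB.conj, ← mul_assoc, ← map_mul]
      have key : e * ι c * e = ι a * e := by
        rw [heιc, Finset.sum_mul, ha, map_sum, Finset.sum_mul]
        exact Finset.sum_congr rfl fun γ _ => by rw [mul_assoc, hue]
      calc ι a * e = e * ι c * e := key.symm
        _ = e * (x * e) := by rw [hxe, ← mul_assoc]
        _ = x := by rw [← mul_assoc]; exact hx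
  · intro a b
    show ι ((a : A) + (b : A)) * e = ι (a : A) * e + ι (b : A) * e
    rw [map_add, add_mul]
  · intro a b
    show ι ((a : A) * (b : A)) * e = (ι (a : A) * e) * (ι (b : A) * e)
    have h1 : e * (ι (b : A) * e) = ι (b : A) * e := by
      rw [← mul_assoc, heι _ b.2, mul_assoc, hee]
    rw [map_mul, mul_assoc (ι (a : A)) e, h1, ← mul_assoc]
  · show ι (1 : A) * e = e
    rw [map_one, one_mul]
  · intro r
    rfl
end

section
/- Let k be a field of characteristic p > 0, and let W_h = k[h]⟨x, y⟩/(xy - yx - h) be the h-deformed Weyl algebra. Then the elements x^p, y^p, and h are central in W_h, and the subalgebra they generate is a polynomial algebra over k in three variables. -/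
open FreeAlgebra in
/-- The defining relations of the `h`-deformed Weyl algebra
`k[h]⟨x, y⟩ / (xy - yx - h)`: here generator `0` is `x`, `1` is `y`, `2` is `h`;
the relations are `x * y = y * x + h` and `h` is central. -/
inductive WeylHRel (k : Type) [CommRing k] :
    FreeAlgebra k (Fin 3) → FreeAlgebra k (Fin 3) → Prop
  | comm : WeylHRel k (ι k (0 : Fin 3) * ι k (1 : Fin 3))
      (ι k (1 : Fin 3) * ι k (0 : Fin 3) + ι k (2 : Fin 3))
  | hx : WeylHRel k (ι k (2 : Fin 3) * ι k (0 : Fin 3))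
      (ι k (0 : Fin 3) * ι k (2 : Fin 3))
  | hy : WeylHRel k (ι k (2 : Fin 3) * ι k (1 : Fin 3))
      (ι k (1 : Fin 3) * ι k (2 : Fin 3))

/-- The `h`-deformed Weyl algebra `W_h = k[h]⟨x, y⟩ / (xy - yx - h)`. -/
abbrev WeylH (k : Type) [CommRing k] : Type := RingQuot (WeylHRel k)

/-- The generators `x`, `y`, `h` of `W_h`. -/
noncomputable def WeylH.gen (k : Type) [CommRing k] (i : Fin 3) : WeylH k :=
  RingQuot.mkAlgHom k (WeylHRel k) (FreeAlgebra.ι k i)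

/-!
In characteristic `p`, `x ^ p` commutes with `y` because
`x ^ p * y - y * x ^ p = p * h * x ^ (p - 1) = 0`; symmetrically for `y ^ p`, and `h` is central.

For the algebraic independence, `W_h` acts on `k[a, b, c]` by `x ↦ a`, `y ↦ b - c ^ p ∂_a`,
`h ↦ c ^ p`. The operators `b` and `c ^ p ∂_a` commute and `∂_a ^ p = 0`, so `y ^ p` acts as
`b ^ p - c ^ (p ^ 2) ∂_a ^ p = b ^ p`. Hence `x ^ p, y ^ p, h` act as multiplication by
`a ^ p, b ^ p, c ^ p`, which are algebraically independent, so the substitution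
`X₀ ↦ x ^ p, X₁ ↦ y ^ p, X₂ ↦ h` is injective.
-/

open MvPolynomial

theorem pow_succ_mul_eq_mul_pow_succ_add {R : Type*} [Semiring R] {a b c : R}
    (h : a * b = b * a + c) (hc : Commute a c) (n : ℕ) :
    a ^ (n + 1) * b = b * a ^ (n + 1) + (n + 1) • (c * a ^ n) := by
  induction n with
  | zero => simpa using h
  | succ n ih =>
    calc a ^ (n + 2) * b = a * (a ^ (n + 1) * b) := by rw [← mul_assoc, ← pow_succ']
      _ = (b * a + c) * a ^ (n + 1) + (n + 1) • (c * a ^ (n + 1)) := by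
          rw [ih, mul_add, mul_smul_comm, ← mul_assoc, h, ← mul_assoc, hc.eq, mul_assoc,
            ← pow_succ']
      _ = b * a ^ (n + 2) + (n + 2) • (c * a ^ (n + 1)) := by
          rw [add_mul, mul_assoc, ← pow_succ', add_assoc, add_nsmul _ (n + 1) 1, one_nsmul,
            add_comm (c * _)]

theorem commute_pow_of_mul_eq_mul_add {R : Type*} [Semiring R] {a b c : R}
    (h : a * b = b * a + c) (hc : Commute a c) {n : ℕ} (hn : (n : R) = 0) :
    Commute (a ^ n) b := by
  cases n with
  | zero => simp
  | succ n =>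
    rw [Commute, SemiconjBy, pow_succ_mul_eq_mul_pow_succ_add h hc, nsmul_eq_mul, hn, zero_mul,
      add_zero]

namespace MvPolynomial

variable {σ R : Type*} [CommSemiring R]

theorem coeff_iterate_pderiv (i : σ) (n : ℕ) (f : MvPolynomial σ R) (m : σ →₀ ℕ) :
    coeff m ((pderiv i)^[n] f) = coeff (m + Finsupp.single i n) f * (m i + 1).ascFactorial n := by
  induction n generalizing f m with
  | zero => simp
  | succ n ih =>
    rw [Function.iterate_succ_apply, ih, coeff_pderiv, Nat.ascFactorial_succ, add_assoc,
      ← Finsupp.single_add]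
    simp only [Finsupp.add_apply, Finsupp.single_eq_same]
    push_cast
    ring

theorem pderiv_toLinearMap_pow_eq_zero (i : σ) {n : ℕ} (hn : (n.factorial : R) = 0) :
    ((pderiv i : Derivation R (MvPolynomial σ R) (MvPolynomial σ R)) :
      Module.End R (MvPolynomial σ R)) ^ n = 0 := by
  ext f m
  obtain ⟨c, hc⟩ := Nat.factorial_dvd_ascFactorial (m i + 1) n
  simp [Module.End.pow_apply, coeff_iterate_pderiv, hc, hn]

theorem range_comp_aeval {S A : Type*} [CommSemiring S] [Algebra R S] [Semiring A] [Algebra R A]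
    (φ : S →ₐ[R] A) (v : σ → S) :
    (φ.comp (aeval v)).range = Algebra.adjoin R (Set.range (φ ∘ v)) := by
  rw [AlgHom.range_comp, aeval_range, AlgHom.map_adjoin, Set.range_comp]

end MvPolynomial

namespace Derivation

variable {k A : Type*} [CommRing A]

theorem toLinearMap_mul_lmul [CommRing k] [Algebra k A] (D : Derivation k A A) (a : A) :
    (D : Module.End k A) * Algebra.lmul k A a
      = Algebra.lmul k A a * D + Algebra.lmul k A (D a) := by
  ext f
  simp only [Algebra.coe_lmul_eq_mul, Module.End.mul_apply, LinearMap.mul_apply_apply, coeFn_coe,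
    leibniz, smul_eq_mul, LinearMap.add_apply]
  ring

theorem commute_lmul_of_eq_zero [CommRing k] [Algebra k A] (D : Derivation k A A) {a : A}
    (ha : D a = 0) : Commute (Algebra.lmul k A a) (D : Module.End k A) := by
  rw [Commute, SemiconjBy, D.toLinearMap_mul_lmul, ha, map_zero, add_zero]

theorem lmul_sub_lmul_mul_pow_char [Field k] [Algebra k A] [Nontrivial A] (D : Derivation k A A)
    (p : ℕ) [Fact p.Prime] [CharP k p] {v q : A} (hv : D v = 0) (hq : D q = 0)
    (hD : (D : Module.End k A) ^ p = 0) :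
    (Algebra.lmul k A v - Algebra.lmul k A q * D) ^ p = Algebra.lmul k A (v ^ p) := by
  have : CharP (Module.End k A) p := charP_of_injective_algebraMap (algebraMap k _).injective p
  have hvq : Commute (Algebra.lmul k A v) (Algebra.lmul k A q * D) :=
    ((Commute.all v q).map (Algebra.lmul k A)).mul_right (D.commute_lmul_of_eq_zero hv)
  rw [sub_pow_char_of_commute _ hvq, (D.commute_lmul_of_eq_zero hq).mul_pow, hD, mul_zero,
    sub_zero, map_pow]

end Derivation

namespace WeylH

section CommRing

variable (k : Type) [CommRing k]

theorem gen_zero_mul_gen_one : gen k 0 * gen k 1 = gen k 1 * gen k 0 + gen k 2 := by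
  simpa only [map_mul, map_add, gen] using RingQuot.mkAlgHom_rel k (WeylHRel.comm (k := k))

theorem commute_gen_two (i : Fin 3) : Commute (gen k 2) (gen k i) := by
  fin_cases i
  · exact (map_mul _ _ _).symm.trans ((RingQuot.mkAlgHom_rel k WeylHRel.hx).trans (map_mul _ _ _))
  · exact (map_mul _ _ _).symm.trans ((RingQuot.mkAlgHom_rel k WeylHRel.hy).trans (map_mul _ _ _))
  · exact Commute.refl _

theorem adjoin_range_gen : Algebra.adjoin k (Set.range (gen k)) = ⊤ := by
  rw [show gen k = RingQuot.mkAlgHom k (WeylHRel k) ∘ FreeAlgebra.ι k from rfl, Set.range_comp,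
    ← AlgHom.map_adjoin, FreeAlgebra.adjoin_range_ι, Algebra.map_top, AlgHom.range_eq_top]
  exact RingQuot.mkAlgHom_surjective k _

theorem mem_center_of_forall_commute_gen {z : WeylH k} (hz : ∀ i, Commute (gen k i) z) :
    z ∈ Set.center (WeylH k) :=
  Semigroup.mem_center_iff.2 fun _ =>
    Algebra.commute_of_mem_adjoin_of_forall_mem_commute (adjoin_range_gen k ▸ Algebra.mem_top)
      (Set.forall_mem_range.2 fun i => (hz i).symm) |>.symm.eq

theorem gen_two_mem_center : gen k 2 ∈ Set.center (WeylH k) :=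
  mem_center_of_forall_commute_gen k fun i => (commute_gen_two k i).symm

variable (p : ℕ) [CharP k p]

theorem natCast_eq_zero : (p : WeylH k) = 0 := by
  rw [← map_natCast (algebraMap k (WeylH k)), CharP.cast_eq_zero, map_zero]

theorem gen_zero_pow_mem_center : gen k 0 ^ p ∈ Set.center (WeylH k) := by
  refine mem_center_of_forall_commute_gen k fun i => ?_
  fin_cases i
  · exact (Commute.refl _).pow_right p
  · exact (commute_pow_of_mul_eq_mul_add (gen_zero_mul_gen_one k) (commute_gen_two k 0).symm
      (natCast_eq_zero k p)).symm
  · exact (commute_gen_two k 0).pow_right p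

theorem gen_one_pow_mem_center : gen k 1 ^ p ∈ Set.center (WeylH k) := by
  refine mem_center_of_forall_commute_gen k fun i => ?_
  fin_cases i
  · have h : gen k 1 * gen k 0 = gen k 0 * gen k 1 + -gen k 2 := by
      rw [gen_zero_mul_gen_one, add_neg_cancel_right]
    exact (commute_pow_of_mul_eq_mul_add h (commute_gen_two k 1).symm.neg_right
      (natCast_eq_zero k p)).symm
  · exact (Commute.refl _).pow_right p
  · exact (commute_gen_two k 1).pow_right p

noncomputable def frobeniusAeval : MvPolynomial (Fin 3) k →ₐ[k] WeylH k :=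
  (Subalgebra.center k (WeylH k)).val.comp <| aeval
    ![⟨_, gen_zero_pow_mem_center k p⟩, ⟨_, gen_one_pow_mem_center k p⟩,
      ⟨_, gen_two_mem_center k⟩]

theorem range_frobeniusAeval :
    (frobeniusAeval k p).range = Algebra.adjoin k {gen k 0 ^ p, gen k 1 ^ p, gen k 2} := by
  rw [frobeniusAeval, range_comp_aeval, Set.range_comp, Matrix.range_cons,
    Matrix.range_cons_cons_empty, Set.singleton_union, Set.image_insert_eq, Set.image_pair]
  rfl

end CommRing

section Representation

variable {k : Type} [CommRing k]

noncomputable def lift {A : Type*} [Semiring A] [Algebra k A] (a b c : A)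
    (hab : a * b = b * a + c) (hca : Commute c a) (hcb : Commute c b) : WeylH k →ₐ[k] A :=
  RingQuot.liftAlgHom k ⟨FreeAlgebra.lift k ![a, b, c], by
    rintro _ _ ⟨⟩ <;> simp [hab, hca.eq, hcb.eq]⟩

theorem lift_gen {A : Type*} [Semiring A] [Algebra k A] (a b c : A) (hab : a * b = b * a + c)
    (hca : Commute c a) (hcb : Commute c b) (i : Fin 3) :
    lift a b c hab hca hcb (gen k i) = ![a, b, c] i := by
  rw [lift, gen, RingQuot.liftAlgHom_mkAlgHom_apply, FreeAlgebra.lift_ι_apply]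

variable {A : Type*} [CommRing A] [Algebra k A]

noncomputable def derivationRep (D : Derivation k A A) (u v q : A) (hu : D u = 1)
    (hq : D q = 0) : WeylH k →ₐ[k] Module.End k A :=
  lift (Algebra.lmul k A u) (Algebra.lmul k A v - Algebra.lmul k A q * D) (Algebra.lmul k A q)
    (by
      ext f
      simp only [Algebra.coe_lmul_eq_mul, Module.End.mul_apply, LinearMap.sub_apply,
        LinearMap.mul_apply_apply, Derivation.coeFn_coe, LinearMap.add_apply,
        Derivation.leibniz, smul_eq_mul, hu, mul_one]
      ring)
    ((Commute.all q u).map (Algebra.lmul k A))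
    (((Commute.all q v).map (Algebra.lmul k A)).sub_right
      ((Commute.refl _).mul_right (D.commute_lmul_of_eq_zero hq)))

theorem derivationRep_gen (D : Derivation k A A) (u v q : A) (hu : D u = 1) (hq : D q = 0)
    (i : Fin 3) :
    derivationRep D u v q hu hq (gen k i)
      = ![Algebra.lmul k A u, Algebra.lmul k A v - Algebra.lmul k A q * D, Algebra.lmul k A q] i :=
  lift_gen ..

end Representation

theorem frobeniusAeval_injective (k : Type) [Field k] (p : ℕ) [Fact p.Prime] [CharP k p] :
    Function.Injective (frobeniusAeval k p) := by
  -- `h` acts as `X₂ ^ p` so that the composite below is `expand p`.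
  let ρ := derivationRep (pderiv 0 : Derivation k (MvPolynomial (Fin 3) k) _) (X 0) (X 1)
    (X 2 ^ p) (pderiv_X_self 0) (by simp)
  have hρ : ρ.comp (frobeniusAeval k p) = (Algebra.lmul k _).comp (expand p) := by
    refine algHom_ext fun i => ?_
    rw [AlgHom.comp_apply, frobeniusAeval, AlgHom.comp_apply, AlgHom.comp_apply, aeval_X,
      expand_X]
    fin_cases i
    · show ρ (gen k 0 ^ p) = Algebra.lmul k _ (X 0 ^ p)
      rw [map_pow, derivationRep_gen]
      exact (map_pow _ _ _).symm
    · show ρ (gen k 1 ^ p) = Algebra.lmul k _ (X 1 ^ p)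
      rw [map_pow, derivationRep_gen]
      exact Derivation.lmul_sub_lmul_mul_pow_char _ p (pderiv_X_of_ne (by decide)) (by simp)
        (pderiv_toLinearMap_pow_eq_zero 0 ((CharP.cast_eq_zero_iff k p _).2
          (Nat.dvd_factorial (Fact.out : p.Prime).pos le_rfl)))
    · show ρ (gen k 2) = Algebra.lmul k _ (X 2 ^ p)
      rw [derivationRep_gen]
      rfl
  refine Function.Injective.of_comp (f := ρ) ?_
  rw [← AlgHom.coe_comp, hρ, AlgHom.coe_comp]
  exact Algebra.lmul_injective.comp (expand_injective (Fact.out : p.Prime).pos)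

end WeylH

/-- Let `k` be a field of characteristic `p > 0` and
`W_h = k[h]⟨x, y⟩/(xy - yx - h)` the `h`-deformed Weyl algebra. Then `x ^ p`, `y ^ p`
and `h` are central in `W_h`, and the subalgebra they generate is a polynomial algebra
over `k` in three variables. -/
theorem weylH_frobenius_center
    (k : Type) [Field k] (p : ℕ) [Fact p.Prime] [CharP k p] :
    ((WeylH.gen k 0) ^ p ∈ Set.center (WeylH k) ∧
      (WeylH.gen k 1) ^ p ∈ Set.center (WeylH k) ∧
      WeylH.gen k 2 ∈ Set.center (WeylH k)) ∧
    Nonempty (MvPolynomial (Fin 3) k ≃ₐ[k]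
      (Algebra.adjoin k {(WeylH.gen k 0) ^ p, (WeylH.gen k 1) ^ p, WeylH.gen k 2} :
        Subalgebra k (WeylH k))) :=
  ⟨⟨WeylH.gen_zero_pow_mem_center k p, WeylH.gen_one_pow_mem_center k p,
      WeylH.gen_two_mem_center k⟩,
    ⟨(AlgEquiv.ofInjective _ (WeylH.frobeniusAeval_injective k p)).trans
      (Subalgebra.equivOfEq _ _ (WeylH.range_frobeniusAeval k p))⟩⟩
end

section
/- Let F : C → D be a triangulated functor between triangulated categories with D nonzero, such that: (i) F admits a left adjoint F' with the adjunction unit id → F ∘ F' an isomorphism; (ii) C is indecomposable as a triangulated category; (iii) C admits a Serre functor isomorphic to a shift functor. Then F is an equivalence of categories. -/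
/-!
Let `Q` be the class of objects killed by `F` and `P` its two-sided orthogonal. By adjunction
nothing nonzero maps from the image of `F'` to `Q`, and Calabi–Yau duality
`Hom(q, F'd) ≅ Hom(F'd, q⟦n⟧)^*` gives the other direction, so `F'` lands in `P`. Since the unit
is an isomorphism, `F` inverts the counit `F'FX ⟶ X`, so its cone lies in `Q`; the connecting
morphism of that triangle goes from `Q` to `P` and hence vanishes, splitting `X ≅ F'FX ⊞ cone`.
Indecomposability then kills `Q` (as `P` contains `F'` of a nonzero object, which is nonzero),
so every counit component is an isomorphism.
-/

open CategoryTheory Limits Pretriangulated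

theorem Equiv.eq_zero_of_forall_eq_zero {α β : Type*} [Zero α] [Zero β] (e : α ≃ β)
    (h : ∀ b : β, b = 0) (a : α) : a = 0 :=
  e.injective ((h _).trans (h _).symm)

theorem LinearEquiv.eq_zero_of_forall_eq_zero {k M N : Type*} [Field k] [AddCommGroup M]
    [Module k M] [AddCommGroup N] [Module k N] (e : M ≃ₗ[k] Module.Dual k N)
    (h : ∀ y : N, y = 0) (x : M) : x = 0 :=
  e.toEquiv.eq_zero_of_forall_eq_zero (fun φ => LinearMap.ext fun y => by simp [h y]) x

namespace CategoryTheory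

section Biorthogonal

variable {C : Type*} [Category C] [HasZeroMorphisms C]

def biorthogonal (Q : Set C) : Set C :=
  {X | ∀ q ∈ Q, (∀ f : X ⟶ q, f = 0) ∧ (∀ f : q ⟶ X, f = 0)}

theorem shift_mem_biorthogonal [HasShift C ℤ] {Q : Set C} (hQ : ∀ X ∈ Q, ∀ m : ℤ, X⟦m⟧ ∈ Q)
    {X : C} (hX : X ∈ biorthogonal Q) (m : ℤ) : X⟦m⟧ ∈ biorthogonal Q := fun q hq =>
  ⟨((shiftEquiv C m).toAdjunction.homEquiv X q).eq_zero_of_forall_eq_zero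
      (hX _ (hQ q hq (-m))).1,
    ((shiftEquiv' C (-m) m (neg_add_cancel m)).toAdjunction.homEquiv q X).symm
      |>.eq_zero_of_forall_eq_zero (hX _ (hQ q hq (-m))).2⟩

end Biorthogonal

theorem Functor.isZero_obj_shift {C D : Type*} [Category C] [Category D] [HasShift C ℤ]
    [HasShift D ℤ] [HasZeroMorphisms D] [∀ m : ℤ, (shiftFunctor D m).PreservesZeroMorphisms]
    (F : C ⥤ D) [F.CommShift ℤ] {X : C} (hX : IsZero (F.obj X)) (m : ℤ) :
    IsZero (F.obj (X⟦m⟧)) :=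
  ((shiftFunctor D m).map_isZero hX).of_iso ((F.commShiftIso m).app X)

namespace Adjunction

variable {C D : Type*} [Category C] [Category D] {G : D ⥤ C} {F : C ⥤ D}

theorem eq_zero_of_isZero_obj [HasZeroMorphisms C] (adj : G ⊣ F) {X : D} {Y : C}
    (hY : IsZero (F.obj Y)) (f : G.obj X ⟶ Y) : f = 0 :=
  (adj.homEquiv X Y).injective (hY.eq_of_tgt _ _)

theorem obj_mem_biorthogonal_of_serre {k : Type*} [Field k] [Preadditive C] [Linear k C]
    [HasShift C ℤ] [HasShift D ℤ] [HasZeroMorphisms D]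
    [∀ m : ℤ, (shiftFunctor D m).PreservesZeroMorphisms] [F.CommShift ℤ] (adj : G ⊣ F) (n : ℤ)
    (serre : ∀ X Y : C, (X ⟶ Y) ≃ₗ[k] Module.Dual k (Y ⟶ X⟦n⟧)) (d : D) :
    G.obj d ∈ biorthogonal {X | IsZero (F.obj X)} := fun q hq =>
  ⟨adj.eq_zero_of_isZero_obj hq,
    (serre q (G.obj d)).eq_zero_of_forall_eq_zero
      (adj.eq_zero_of_isZero_obj (F.isZero_obj_shift hq n))⟩

theorem isZero_obj₃_of_distTriang_counit [HasZeroObject C] [HasZeroObject D] [Preadditive C]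
    [Preadditive D] [HasShift C ℤ] [HasShift D ℤ] [∀ m : ℤ, (shiftFunctor C m).Additive]
    [∀ m : ℤ, (shiftFunctor D m).Additive] [Pretriangulated C] [Pretriangulated D]
    [F.CommShift ℤ] [F.IsTriangulated] (adj : G ⊣ F) [IsIso adj.unit] {X Y : C} (g : X ⟶ Y)
    (h : Y ⟶ (G.obj (F.obj X))⟦(1 : ℤ)⟧)
    (hT : Triangle.mk (adj.counit.app X) g h ∈ distTriang C) :
    IsZero (F.obj Y) :=
  have : IsIso (F.map (adj.counit.app X)) :=
    isIso_of_hom_comp_eq_id _ (adj.right_triangle_components X)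
  (F.mapTriangle.obj _).isZero₃_of_isIso₁ (F.map_distinguished _ hT) this

end Adjunction

end CategoryTheory

/-- Let `F : C → D` be a triangulated functor between triangulated
categories with `D` nonzero, such that (i) `F` admits a left adjoint `F'` with the
adjunction unit `id → F ∘ F'` an isomorphism; (ii) `C` is indecomposable as a
triangulated category (any decomposition of `C` into two mutually orthogonal
shift-stable classes through which every object factors as a biproduct has one side
consisting of zero objects); (iii) `C` admits a Serre functor isomorphic to a shift
functor (`C` is Calabi–Yau). Then `F` is an equivalence. -/
theorem triangulated_functor_equivalence_of_calabiYau
    {k : Type*} [Field k]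
    {C D : Type*} [Category C] [Category D]
    [HasZeroObject C] [HasZeroObject D] [Preadditive C] [Preadditive D]
    [Linear k C] [HasShift C ℤ] [HasShift D ℤ]
    [∀ n : ℤ, (shiftFunctor C n).Additive] [∀ n : ℤ, (shiftFunctor D n).Additive]
    [Pretriangulated C] [Pretriangulated D] [HasBinaryBiproducts C]
    [∀ X Y : C, FiniteDimensional k (X ⟶ Y)]
    (F : C ⥤ D) [F.CommShift ℤ] [F.IsTriangulated]
    (F' : D ⥤ C) (adj : F' ⊣ F)
    -- (i) the adjunction unit `id → F ∘ F'` is an isomorphism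
    (hunit : IsIso adj.unit)
    -- `D` is nonzero
    (hD : ∃ X : D, ¬ IsZero X)
    -- (ii) `C` is indecomposable as a triangulated category
    (hindec : ∀ P Q : Set C,
      (∀ X ∈ P, ∀ n : ℤ, X⟦n⟧ ∈ P) → (∀ X ∈ Q, ∀ n : ℤ, X⟦n⟧ ∈ Q) →
      (∀ p ∈ P, ∀ q ∈ Q, (∀ f : p ⟶ q, f = 0) ∧ (∀ f : q ⟶ p, f = 0)) →
      (∀ X : C, ∃ p ∈ P, ∃ q ∈ Q, Nonempty (X ≅ p ⊞ q)) →
      (∀ p ∈ P, IsZero p) ∨ (∀ q ∈ Q, IsZero q))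
    -- (iii) `C` is Calabi–Yau: the Serre functor is the shift by `n`
    (n : ℤ)
    (serre : ∀ X Y : C, (X ⟶ Y) ≃ₗ[k] Module.Dual k (Y ⟶ X⟦n⟧)) :
    F.IsEquivalence := by
  let Q : Set C := {X | IsZero (F.obj X)}
  have hQ : ∀ X ∈ Q, ∀ m : ℤ, X⟦m⟧ ∈ Q := fun X hX m => F.isZero_obj_shift hX m
  have hP : ∀ d : D, F'.obj d ∈ biorthogonal Q := adj.obj_mem_biorthogonal_of_serre n serre
  have hdecomp : ∀ X : C, ∃ p ∈ biorthogonal Q, ∃ q ∈ Q, Nonempty (X ≅ p ⊞ q) := by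
    intro X
    obtain ⟨Y, g, h, hT⟩ := distinguished_cocone_triangle (adj.counit.app X)
    have hY : Y ∈ Q := adj.isZero_obj₃_of_distTriang_counit g h hT
    have h0 : h = 0 := (shift_mem_biorthogonal hQ (hP _) 1 Y hY).2 h
    obtain ⟨e, -⟩ := exists_iso_binaryBiproduct_of_distTriang _ hT h0
    exact ⟨_, hP _, Y, hY, ⟨e⟩⟩
  rcases hindec (biorthogonal Q) Q (fun X hX => shift_mem_biorthogonal hQ hX) hQ
    (fun p hp => hp) hdecomp with hPzero | hQzero
  · obtain ⟨X, hX⟩ := hD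
    exact absurd ((F.map_isZero (hPzero _ (hP X))).of_iso (asIso (adj.unit.app X))) hX
  · have (X : C) : IsIso (adj.counit.app X) := by
      obtain ⟨Y, g, h, hT⟩ := distinguished_cocone_triangle (adj.counit.app X)
      exact (Triangle.isZero₃_iff_isIso₁ _ hT).1
        (hQzero Y (adj.isZero_obj₃_of_distTriang_counit g h hT))
    exact adj.toEquivalence.isEquivalence_inverse
end

section
/- Let k be a perfect field of characteristic p > 0 and let A be an associative flat k[[h]]-algebra, h-adically complete and separated, with A/hA isomorphic as a Poisson algebra to the algebra of functions on the Frobenius neighborhood of a point of a smooth symplectic variety. If the reduction mod h of the center of A[h⁻¹] intersected with A is contained in the Poisson center of A/hA, and the Poisson center of A/hA is one-dimensional, then the center of A[h⁻¹] equals k((h)). -/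
/-!
A central element `b` of `A[h⁻¹]` becomes, after multiplying by a power of `h`, the image of
some `a ∈ A` with `φ a` central. The hypotheses say that such an `a` is congruent to a scalar
`c₀ ∈ k` modulo `h`, and `(a - c₀) / h` is again of the same kind. Iterating gives
`a ≡ c₀ + c₁ h + ⋯ + c_{m-1} h^{m-1} (mod h^m)` for every `m`, so by `h`-adic separatedness
`a` is the image of the power series `∑ cᵢ hⁱ`, and `b ∈ k((h))`.
-/

open PowerSeries

theorem Set.mem_center_of_mul_mem_center_of_isUnit {M : Type*} [Monoid M] {u b : M}
    (hu : IsUnit u) (huc : u ∈ Set.center M) (hbu : b * u ∈ Set.center M) :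
    b ∈ Set.center M := by
  obtain ⟨v, rfl⟩ := hu
  simpa using Set.mul_mem_center hbu (Set.units_inv_mem_center huc)

theorem RingHom.map_mem_center_of_isUnit_of_forall_mul_pow_mem_range {A B : Type*} [Ring A]
    [Ring B] (φ : A →+* B) {h : A} (hu : IsUnit (φ h))
    (hgen : ∀ b : B, ∃ (a : A) (n : ℕ), b * φ h ^ n = φ a) {z : A}
    (hz : z ∈ Set.center A) : φ z ∈ Set.center B := by
  have hcomm : ∀ x : A, Commute (φ z) (φ x) := fun x =>
    Commute.map (Semigroup.mem_center_iff.mp hz x).symm φ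
  refine Semigroup.mem_center_iff.mpr fun g => ?_
  obtain ⟨a, n, hga⟩ := hgen g
  refine (hu.pow n).mul_right_cancel ?_
  calc g * φ z * φ h ^ n = g * φ h ^ n * φ z := by
        rw [mul_assoc, mul_assoc, ← map_pow, (hcomm (h ^ n)).eq]
    _ = φ z * (g * φ h ^ n) := by rw [hga, (hcomm a).eq]
    _ = φ z * g * φ h ^ n := (mul_assoc _ _ _).symm

theorem AlgHom.exists_eq_algebraMap_add_mul_of_mem_range {k A Q : Type*} [CommSemiring k]
    [Ring A] [Ring Q] [Algebra k A] [Algebra k Q] (π : A →ₐ[k] Q) {h : A}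
    (hker : ∀ a : A, π a = 0 ↔ ∃ b : A, a = h * b) {x : A}
    (hx : π x ∈ Set.range (algebraMap k Q)) :
    ∃ c : k, ∃ y : A, x = algebraMap k A c + h * y := by
  obtain ⟨c, hc⟩ := hx
  obtain ⟨y, hy⟩ :=
    (hker (x - algebraMap k A c)).mp (by rw [map_sub, AlgHom.commutes, hc, sub_self])
  exact ⟨c, y, by rw [← hy, add_sub_cancel]⟩

theorem PowerSeries.mem_range_algebraMap_of_forall_eq_algebraMap_add_X_smul {k A : Type*}
    [CommRing k] [Ring A] [Algebra k A] [Algebra k⟦X⟧ A] [IsScalarTower k k⟦X⟧ A]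
    [IsHausdorff (Ideal.span {(X : k⟦X⟧)}) A] (S : Set A)
    (hS : ∀ x ∈ S, ∃ c : k, ∃ y ∈ S, x = algebraMap k A c + (X : k⟦X⟧) • y) {x : A}
    (hx : x ∈ S) : x ∈ Set.range (algebraMap k⟦X⟧ A) := by
  have hS' : ∀ x : S, ∃ c : k, ∃ y : S,
      (x : A) = algebraMap k A c + (X : k⟦X⟧) • (y : A) :=
    fun x => let ⟨c, y, hy, e⟩ := hS x x.2; ⟨c, ⟨y, hy⟩, e⟩
  choose c y hxy using hS'
  let F : S → k⟦X⟧ := fun x => mk fun i => c (y^[i] x)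
  have hF : ∀ x, F x = X * F (y x) + C (c x) := fun x => by
    refine (eq_X_mul_shift_add_const (F x)).trans ?_
    simp [F, Function.iterate_succ_apply]
  have hmem : ∀ n, ∀ x : S,
      (x : A) - algebraMap k⟦X⟧ A (F x) ∈
        (Ideal.span {(X : k⟦X⟧)} ^ n • ⊤ : Submodule k⟦X⟧ A) := by
    intro n
    induction n with
    | zero => simp
    | succ n ih =>
      intro x
      have hshift : (x : A) - algebraMap k⟦X⟧ A (F x) =
          (X : k⟦X⟧) • ((y x : A) - algebraMap k⟦X⟧ A (F (y x))) := by
        rw [hxy x, hF x, map_add, map_mul, ← algebraMap_eq, ← IsScalarTower.algebraMap_apply]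
        simp only [Algebra.smul_def, mul_sub]
        abel
      rw [hshift, pow_succ', Submodule.mul_smul]
      exact Submodule.smul_mem_smul (Ideal.mem_span_singleton_self _) (ih (y x))
  refine ⟨F ⟨x, hx⟩, ((IsHausdorff.eq_iff_smodEq (I := Ideal.span {(X : k⟦X⟧)})).mpr
    fun n => SModEq.sub_mem.mpr (hmem n ⟨x, hx⟩)).symm⟩

theorem center_of_localized_quantization_eq_laurent_general
    (k : Type*) [Field k]
    (A : Type*) [Ring A] [Algebra (PowerSeries k) A] [Algebra k A]
    [IsScalarTower k (PowerSeries k) A]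
    [IsAdicComplete (Ideal.span {(PowerSeries.X : PowerSeries k)}) A]
    -- `h` and `h`-torsion-freeness (flatness)
    (h : A) (hh : h = algebraMap (PowerSeries k) A PowerSeries.X)
    -- `A/hA` is commutative, finite-dimensional, with Poisson bracket `br`
    (Q : Type*) [CommRing Q] [Algebra k Q]
    (π : A →ₐ[k] Q)
    (hπker : ∀ a : A, π a = 0 ↔ ∃ b : A, a = h * b)
    (br : Q →ₗ[k] Q →ₗ[k] Q)
    -- the Poisson center of `A/hA` is one-dimensional
    (hPcenter : {q : Q | ∀ q' : Q, br q q' = 0} = Set.range (algebraMap k Q))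
    -- the localization `B = A[h⁻¹]`
    (B : Type*) [Ring B] (φ : A →+* B)
    (hu : IsUnit (φ h))
    (hφgen : ∀ b : B, ∃ (a : A) (n : ℕ), b * φ h ^ n = φ a)
    -- the reduction mod `h` of `Z(A[h⁻¹]) ∩ A` lies in the Poisson center
    (hZred : ∀ a : A, φ a ∈ Set.center B → ∀ q' : Q, br (π a) q' = 0) :
    Set.center B = {b : B | ∃ n : ℕ,
      b * φ h ^ n ∈ Set.range fun f : PowerSeries k => φ (algebraMap (PowerSeries k) A f)} := by
  have hφcen {z : A} (hz : z ∈ Set.center A) : φ z ∈ Set.center B :=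
    φ.map_mem_center_of_isUnit_of_forall_mul_pow_mem_range hu hφgen hz
  have hφh : φ h ∈ Set.center B := hφcen (hh ▸ Set.algebraMap_mem_center _)
  have hdigit : ∀ x ∈ {x : A | φ x ∈ Set.center B},
      ∃ c : k, ∃ y ∈ {x : A | φ x ∈ Set.center B},
        x = algebraMap k A c + (X : k⟦X⟧) • y := by
    intro x hx
    have hπx : π x ∈ Set.range (algebraMap k Q) := hPcenter ▸ hZred x hx
    obtain ⟨c, y, rfl⟩ := π.exists_eq_algebraMap_add_mul_of_mem_range hπker hπx
    refine ⟨c, y, ?_, by rw [Algebra.smul_def, ← hh]⟩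
    have hhy : φ y * φ h ∈ Set.center B := by
      rw [Semigroup.mem_center_iff.mp hφh (φ y), ← map_mul]
      simpa using Set.add_mem_center hx (Set.neg_mem_center (hφcen (Set.algebraMap_mem_center c)))
    exact Set.mem_center_of_mul_mem_center_of_isUnit hu hφh hhy
  have hpow (n : ℕ) : φ h ^ n ∈ Set.center B := (Submonoid.center B).pow_mem hφh n
  ext b
  constructor
  · intro hb
    obtain ⟨a, n, hab⟩ := hφgen b
    obtain ⟨f, hf⟩ := mem_range_algebraMap_of_forall_eq_algebraMap_add_X_smul _ hdigit
      (show φ a ∈ Set.center B from hab ▸ Set.mul_mem_center hb (hpow n))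
    exact ⟨n, f, by simp [hf, hab]⟩
  · rintro ⟨n, f, hf⟩
    exact Set.mem_center_of_mul_mem_center_of_isUnit (hu.pow n) (hpow n)
      (hf ▸ hφcen (Set.algebraMap_mem_center f))

/-- Let `k` be a perfect field of characteristic `p > 0` and `A` an
associative flat `k[[h]]`-algebra, `h`-adically complete and separated, with `A/hA`
isomorphic as a Poisson algebra to the functions on the Frobenius neighbourhood of a
point of a smooth symplectic variety (in particular `A/hA` is a finite-dimensional
commutative `k`-algebra with Poisson bracket `{a,b} = (ab - ba)/h mod h`, rendered below
by `hcomm`/`hbr`). Let `B = A[h⁻¹]` be the localization inverting `h` (rendered by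
`φ, hφ...`). If the reduction mod `h` of `Z(A[h⁻¹]) ∩ A` is contained in the Poisson
center of `A/hA`, and the Poisson center of `A/hA` is one-dimensional (spanned by `1`),
then the center of `A[h⁻¹]` equals `k((h))`. -/
theorem center_of_localized_quantization_eq_laurent
    (k : Type*) [Field k] (p : ℕ) [Fact p.Prime] [CharP k p] [PerfectField k]
    (A : Type*) [Ring A] [Algebra (PowerSeries k) A] [Algebra k A]
    [IsScalarTower k (PowerSeries k) A]
    [Module.Flat (PowerSeries k) A]
    [IsAdicComplete (Ideal.span {(PowerSeries.X : PowerSeries k)}) A]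
    -- `h` and `h`-torsion-freeness (flatness)
    (h : A) (hh : h = algebraMap (PowerSeries k) A PowerSeries.X)
    (hreg : ∀ a : A, h * a = 0 → a = 0)
    -- `A/hA` is commutative, finite-dimensional, with Poisson bracket `br`
    (Q : Type*) [CommRing Q] [Algebra k Q] [FiniteDimensional k Q]
    (π : A →ₐ[k] Q) (hπsurj : Function.Surjective π)
    (hπker : ∀ a : A, π a = 0 ↔ ∃ b : A, a = h * b)
    (br : Q →ₗ[k] Q →ₗ[k] Q)
    (hbr : ∀ a b : A, ∃ c : A, a * b - b * a = h * c ∧ π c = br (π a) (π b))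
    -- the Poisson center of `A/hA` is one-dimensional
    (hPcenter : {q : Q | ∀ q' : Q, br q q' = 0} = Set.range (algebraMap k Q))
    -- the localization `B = A[h⁻¹]`
    (B : Type*) [Ring B] (φ : A →+* B)
    (hφinj : Function.Injective φ)
    (hu : IsUnit (φ h))
    (hφgen : ∀ b : B, ∃ (a : A) (n : ℕ), b * φ h ^ n = φ a)
    -- the reduction mod `h` of `Z(A[h⁻¹]) ∩ A` lies in the Poisson center
    (hZred : ∀ a : A, φ a ∈ Set.center B → ∀ q' : Q, br (π a) q' = 0) :
    Set.center B = {b : B | ∃ n : ℕ,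
      b * φ h ^ n ∈ Set.range fun f : PowerSeries k => φ (algebraMap (PowerSeries k) A f)} :=
  center_of_localized_quantization_eq_laurent_general k A h hh Q π hπker br hPcenter B φ hu hφgen
    hZred
end
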